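/- Let P ∈ ℝ^{d×d*} be a matrix with orthonormal columns (Pᵀ P = I_{d*}), let X̄₀ be a random vector in ℝ^{d*} with density p̄₀, set X₀ := P X̄₀, and let ε ∼ N(0, I_d), ε̄ ∼ N(0, I_{d*}) be standard Gaussians. For μ_t, σ_t > 0, let p_t be the density of μ_t X₀ + σ_t ε and p̄_t the density of μ_t X̄₀ + σ_t ε̄. Then for every x ∈ ℝ^d: p_t(x) = (2πσ_t²)^{−(d−d*)/2} · exp(−‖(I_d − P Pᵀ)x‖₂² / (2σ_t²)) · p̄_t(Pᵀ x). -/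
import Mathlib

open MeasureTheory Real Matrix

/-- The `d`-dimensional Gaussian density `φ_d(x; m, σ² I_d)`. -/
noncomputable def gaussKernel (d : ℕ) (σ2 : ℝ) (x m : Fin d → ℝ) : ℝ :=
  (2 * Real.pi * σ2) ^ (-(d : ℝ) / 2) *
    Real.exp (-(∑ i, (x i - m i) ^ 2) / (2 * σ2))

lemma pyth_aux {d ds : ℕ} (P : Matrix (Fin d) (Fin ds) ℝ) (hP : P.transpose * P = 1)
    (μ : ℝ) (x : Fin d → ℝ) (x0 : Fin ds → ℝ) :
    ∑ i, (x i - (μ • P.mulVec x0) i) ^ 2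
      = ∑ i, (x i - P.mulVec (P.transpose.mulVec x) i) ^ 2
        + ∑ j, (P.transpose.mulVec x j - (μ • x0) j) ^ 2 := by
  set u : Fin d → ℝ := x - P.mulVec (P.transpose.mulVec x) with hu
  set w : Fin ds → ℝ := P.transpose.mulVec x - μ • x0 with hw
  have h1 : x - μ • P.mulVec x0 = u + P.mulVec w := by
    funext i
    simp [hu, hw, Matrix.mulVec_sub, Matrix.mulVec_mulVec, hP, Matrix.one_mulVec,
      Matrix.mulVec_smul]
  have hPu : P.transpose.mulVec u = 0 := by
    simp [hu, Matrix.mulVec_sub, Matrix.mulVec_mulVec, ← Matrix.mul_assoc, hP,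
      Matrix.one_mulVec]
  have hcross : u ⬝ᵥ P.mulVec w = 0 := by
    rw [Matrix.dotProduct_mulVec, ← Matrix.mulVec_transpose, hPu]
    simp
  have hPw : P.mulVec w ⬝ᵥ P.mulVec w = w ⬝ᵥ w := by
    rw [Matrix.dotProduct_mulVec, ← Matrix.mulVec_transpose, Matrix.mulVec_mulVec, hP,
      Matrix.one_mulVec]
  have key : (x - μ • P.mulVec x0) ⬝ᵥ (x - μ • P.mulVec x0) = u ⬝ᵥ u + w ⬝ᵥ w := by
    rw [h1, add_dotProduct, dotProduct_add, dotProduct_add,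
      dotProduct_comm (P.mulVec w) u, hcross, hPw]
    ring
  have e1 : ∑ i, (x i - (μ • P.mulVec x0) i) ^ 2
      = (x - μ • P.mulVec x0) ⬝ᵥ (x - μ • P.mulVec x0) := by
    simp [dotProduct, sq]
  rw [e1, key]
  congr 1
  · simp [dotProduct, hu, sq]
  · simp [dotProduct, hw, sq]

lemma gauss_factor {d ds : ℕ} (P : Matrix (Fin d) (Fin ds) ℝ) (hP : P.transpose * P = 1)
    (μ σ2 : ℝ) (hσ2 : 0 < σ2) (x : Fin d → ℝ) (x0 : Fin ds → ℝ) :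
    gaussKernel d σ2 x (μ • P.mulVec x0)
      = (2 * Real.pi * σ2) ^ (-(((d : ℝ) - (ds : ℝ)) / 2)) *
          Real.exp (-(∑ i, (x i - P.mulVec (P.transpose.mulVec x) i) ^ 2) / (2 * σ2)) *
          gaussKernel ds σ2 (P.transpose.mulVec x) (μ • x0) := by
  have hpos : (0:ℝ) < 2 * Real.pi * σ2 := by positivity
  unfold gaussKernel
  rw [pyth_aux P hP μ x x0]
  rw [show (-(d : ℝ) / 2) = (-(((d : ℝ) - (ds : ℝ)) / 2)) + (-(ds : ℝ) / 2) by ring,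
    Real.rpow_add hpos]
  rw [show (-(∑ i, (x i - P.mulVec (P.transpose.mulVec x) i) ^ 2
        + ∑ j, (P.transpose.mulVec x j - (μ • x0) j) ^ 2) / (2 * σ2))
      = (-(∑ i, (x i - P.mulVec (P.transpose.mulVec x) i) ^ 2) / (2 * σ2))
        + (-(∑ j, (P.transpose.mulVec x j - (μ • x0) j) ^ 2) / (2 * σ2)) by ring,
    Real.exp_add]
  ring

/-- Low-dimensional factorization of the marginal density: if `X₀ = P X̄₀` with
`P` having orthonormal columns, then the density `p_t` of `μ_t X₀ + σ_t ε`
factorizes as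
`p_t(x) = (2πσ_t²)^{−(d−d*)/2} exp(−‖(I − PPᵀ)x‖²/(2σ_t²)) p̄_t(Pᵀx)`,
where `p̄_t` is the density of `μ_t X̄₀ + σ_t ε̄` in `ℝ^{d*}`. -/
theorem marginal_density_low_dimensional_factorization
    {d ds : ℕ} (P : Matrix (Fin d) (Fin ds) ℝ) (hP : P.transpose * P = 1)
    (μt σt : ℝ) (hμt : 0 < μt) (hσt : 0 < σt)
    (p0bar : (Fin ds → ℝ) → ℝ) (hmeas : Measurable p0bar)
    (hnonneg : ∀ x, 0 ≤ p0bar x) (hint : Integrable p0bar)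
    (hone : ∫ x, p0bar x = 1)
    (x : Fin d → ℝ) :
    (∫ x0, gaussKernel d (σt ^ 2) x (μt • P.mulVec x0) * p0bar x0)
      = (2 * Real.pi * σt ^ 2) ^ (-(((d : ℝ) - (ds : ℝ)) / 2)) *
          Real.exp (-(∑ i, (x i - P.mulVec (P.transpose.mulVec x) i) ^ 2)
            / (2 * σt ^ 2)) *
          (∫ x0, gaussKernel ds (σt ^ 2) (P.transpose.mulVec x) (μt • x0)
            * p0bar x0) := by
  have hσ2 : (0:ℝ) < σt ^ 2 := by positivity
  calc (∫ x0, gaussKernel d (σt ^ 2) x (μt • P.mulVec x0) * p0bar x0)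
      = ∫ x0, ((2 * Real.pi * σt ^ 2) ^ (-(((d : ℝ) - (ds : ℝ)) / 2)) *
          Real.exp (-(∑ i, (x i - P.mulVec (P.transpose.mulVec x) i) ^ 2)
            / (2 * σt ^ 2)))
          * (gaussKernel ds (σt ^ 2) (P.transpose.mulVec x) (μt • x0) * p0bar x0) := by
        congr 1
        funext x0
        rw [gauss_factor P hP μt (σt^2) hσ2 x x0]
        ring
    _ = _ := by rw [MeasureTheory.integral_const_mul]
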